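/- arXiv:2407.06225 — 3 statements merged into one kernel-verified Lean document; each statement's English description precedes it below -/
import Mathlib

section
/- With f̄ as above, if there exists an index k such that f̄(ũ_k) < ỹ_k − ε, then the Set Membership feasible set FFS = {f γ-Lipschitz : |ỹ_j − f(ũ_j)| ≤ ε ∀j} is empty. -/
/-- Sufficient falsification condition: if f̄(ũ k) < ỹ k − ε for some k,
then no γ-Lipschitz function is consistent with all the data up to ε (FFS is empty). -/
theorem SM_falsification_sufficient
    (n M : ℕ) (hM : 0 < M)
    (ut : Fin M → EuclideanSpace ℝ (Fin n)) (yt : Fin M → ℝ)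
    (γ ε : ℝ)
    (hfals : ∃ k : Fin M,
      (⨅ j : Fin M, ((yt j + ε) + γ * ‖ut k - ut j‖)) < yt k - ε) :
    ¬ ∃ f : EuclideanSpace ℝ (Fin n) → ℝ,
      (∀ u v, |f u - f v| ≤ γ * ‖u - v‖) ∧ (∀ j, |yt j - f (ut j)| ≤ ε) := by
  rintro ⟨f, hLip, hData⟩
  obtain ⟨k, hk⟩ := hfals
  haveI : Nonempty (Fin M) := ⟨⟨0, hM⟩⟩
  have hlb : f (ut k) ≤ ⨅ j : Fin M, ((yt j + ε) + γ * ‖ut k - ut j‖) := by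
    apply le_ciInf
    intro j
    have h1 := (abs_le.mp (hLip (ut k) (ut j))).2
    have h2 := (abs_le.mp (hData j)).1
    linarith
  have h3 := (abs_le.mp (hData k)).2
  linarith
end

section
/- The condition f̄(ũ_k) ≥ ỹ_k − ε for all k is equivalent to: for all pairs (j,k), ỹ_j − ỹ_k ≤ 2ε + γ‖ũ_j − ũ_k‖₂. Consequently, the feasible set FFS is nonempty if and only if |ỹ_j − ỹ_k| ≤ 2ε + γ‖ũ_j − ũ_k‖₂ for all j, k. -/
/-- f̄(ũ k) ≥ ỹ k − ε for all k iff ỹ j − ỹ k ≤ 2ε + γ‖ũ j − ũ k‖ for all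
pairs; consequently FFS is nonempty iff |ỹ j − ỹ k| ≤ 2ε + γ‖ũ j − ũ k‖ for all j, k. -/
theorem SM_validation_pairwise_characterization
    (n M : ℕ) (hM : 0 < M)
    (ut : Fin M → EuclideanSpace ℝ (Fin n)) (yt : Fin M → ℝ)
    (γ ε : ℝ) (hγ : 0 ≤ γ) (hε : 0 ≤ ε) :
    ((∀ k : Fin M, yt k - ε ≤ ⨅ j : Fin M, ((yt j + ε) + γ * ‖ut k - ut j‖)) ↔
      (∀ j k : Fin M, yt j - yt k ≤ 2 * ε + γ * ‖ut j - ut k‖)) ∧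
    ((∃ f : EuclideanSpace ℝ (Fin n) → ℝ,
        (∀ u v, |f u - f v| ≤ γ * ‖u - v‖) ∧ (∀ k, |yt k - f (ut k)| ≤ ε)) ↔
      (∀ j k : Fin M, |yt j - yt k| ≤ 2 * ε + γ * ‖ut j - ut k‖)) := by
  haveI : Nonempty (Fin M) := ⟨⟨0, hM⟩⟩
  have hbdd : ∀ u : EuclideanSpace ℝ (Fin n),
      BddBelow (Set.range fun j : Fin M => (yt j + ε) + γ * ‖u - ut j‖) :=
    fun u => (Set.finite_range _).bddBelow
  constructor
  · constructor
    · intro h j k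
      have h1 := h j
      have h2 : (⨅ i : Fin M, ((yt i + ε) + γ * ‖ut j - ut i‖)) ≤
          (yt k + ε) + γ * ‖ut j - ut k‖ := ciInf_le (hbdd _) k
      linarith
    · intro h k
      apply le_ciInf
      intro j
      have := h k j
      linarith
  · constructor
    · rintro ⟨f, hf, hfy⟩ j k
      have h1 := hfy j
      have h2 := hfy k
      have h3 := hf (ut j) (ut k)
      rw [abs_le] at h1 h2 h3 ⊢
      constructor <;> linarith [h1.1, h1.2, h2.1, h2.2, h3.1, h3.2]
    · intro h
      refine ⟨fun u => ⨅ j : Fin M, ((yt j + ε) + γ * ‖u - ut j‖), ?_, ?_⟩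
      · have key : ∀ u v : EuclideanSpace ℝ (Fin n),
            (⨅ j : Fin M, ((yt j + ε) + γ * ‖u - ut j‖)) ≤
            (⨅ j : Fin M, ((yt j + ε) + γ * ‖v - ut j‖)) + γ * ‖u - v‖ := by
          intro u v
          rw [← sub_le_iff_le_add]
          apply le_ciInf
          intro j
          rw [sub_le_iff_le_add]
          have htr : ‖u - ut j‖ ≤ ‖u - v‖ + ‖v - ut j‖ := by
            have := dist_triangle u v (ut j)
            simpa [dist_eq_norm] using this
          have hmul := mul_le_mul_of_nonneg_left htr hγ
          have hle : (⨅ i : Fin M, ((yt i + ε) + γ * ‖u - ut i‖)) ≤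
              (yt j + ε) + γ * ‖u - ut j‖ := ciInf_le (hbdd u) j
          nlinarith
        intro u v
        rw [abs_sub_le_iff]
        constructor
        · have := key u v; linarith
        · have := key v u; rw [norm_sub_rev] at this; linarith
      · intro k
        have hub : (⨅ j : Fin M, ((yt j + ε) + γ * ‖ut k - ut j‖)) ≤ yt k + ε := by
          have := ciInf_le (hbdd (ut k)) k
          simpa using this
        have hlb : yt k - ε ≤ ⨅ j : Fin M, ((yt j + ε) + γ * ‖ut k - ut j‖) := by
          apply le_ciInf
          intro j
          have := (abs_le.mp (h k j)).2
          linarith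
        rw [abs_le]
        constructor <;> linarith
end

section
/- Let FFS ⊆ C(U,ℝ) be nonempty with f̲ ≤ f ≤ f̄ for all f ∈ FFS (pointwise on U), and suppose both f̲ and f̄ are in the closure of FFS for the sup-norm. Then for any function g : U → ℝ, sup_{f ∈ FFS} ‖f − g‖_∞^U ≥ max(‖f̄ − g‖_∞^U, ‖f̲ − g‖_∞^U) ≥ ‖f̄ − f̲‖_∞^U / 2, with equality of the outer bound when g = (f̲ + f̄)/2. Hence the central estimate minimizes the worst-case sup-norm error over FFS. -/
lemma SM_pointwise_bound {X : Type*} [TopologicalSpace X] [CompactSpace X]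
    (FFS : Set C(X, ℝ)) (flow fbar : C(X, ℝ))
    (hbetween : ∀ f ∈ FFS, ∀ x : X, flow x ≤ f x ∧ f x ≤ fbar x)
    (g : C(X, ℝ)) : ∀ f ∈ FFS, ‖f - g‖ ≤ max ‖fbar - g‖ ‖flow - g‖ := by
  intro f hf
  apply ContinuousMap.norm_le _ (le_max_of_le_left (norm_nonneg _)) |>.mpr
  intro x
  have h1 := (hbetween f hf x).1
  have h2 := (hbetween f hf x).2
  have hb : |fbar x - g x| ≤ ‖fbar - g‖ := by
    simpa using (fbar - g).norm_coe_le_norm x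
  have hl : |flow x - g x| ≤ ‖flow - g‖ := by
    simpa using (flow - g).norm_coe_le_norm x
  simp only [ContinuousMap.sub_apply, Real.norm_eq_abs]
  rw [abs_le]
  constructor
  · have h0 : -(f x - g x) ≤ -(flow x - g x) := by linarith
    have h3 : -(f x - g x) ≤ |flow x - g x| := le_trans h0 (neg_le_abs _)
    have := le_trans h3 (le_trans hl (le_max_right ‖fbar - g‖ ‖flow - g‖))
    linarith
  · have h3 : f x - g x ≤ |fbar x - g x| := le_trans (by linarith) (le_abs_self _)
    exact le_trans h3 (le_trans hb (le_max_left _ _))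

lemma SM_closure_le_sSup {X : Type*} [TopologicalSpace X] [CompactSpace X]
    (FFS : Set C(X, ℝ)) (h : C(X, ℝ)) (g : C(X, ℝ))
    (hcl : h ∈ closure FFS)
    (hbdd : BddAbove ((fun f => ‖f - g‖) '' FFS)) :
    ‖h - g‖ ≤ sSup ((fun f => ‖f - g‖) '' FFS) := by
  refine le_of_forall_pos_le_add ?_
  intro ε hε
  obtain ⟨f, hf, hd⟩ := Metric.mem_closure_iff.mp hcl ε hε
  have : ‖h - g‖ ≤ ‖f - g‖ + ‖h - f‖ := by
    have := norm_sub_le_norm_sub_add_norm_sub h f g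
    linarith [norm_sub_le (h - f) (f - g)]
  have hd' : ‖h - f‖ < ε := by rwa [← dist_eq_norm]
  have hle : ‖f - g‖ ≤ sSup ((fun f => ‖f - g‖) '' FFS) :=
    le_csSup hbdd ⟨f, hf, rfl⟩
  linarith

/-- Optimality of the central estimator. If every f ∈ FFS ⊆ C(U,ℝ) lies
pointwise between f̲ and f̄, both of which are in the sup-norm closure of FFS, then for
any g the worst-case error sup_{f∈FFS}‖f−g‖ is at least max(‖f̄−g‖,‖f̲−g‖) ≥ ‖f̄−f̲‖/2,
with equality of the outer bound when g is the central estimate (f̲+f̄)/2. -/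
theorem SM_central_estimator_optimal
    {X : Type*} [TopologicalSpace X] [CompactSpace X]
    (FFS : Set C(X, ℝ))
    (flow fbar : C(X, ℝ))
    (hne : FFS.Nonempty)
    (hbetween : ∀ f ∈ FFS, ∀ x : X, flow x ≤ f x ∧ f x ≤ fbar x)
    (hflow : flow ∈ closure FFS) (hfbar : fbar ∈ closure FFS) :
    (∀ g : C(X, ℝ),
        max ‖fbar - g‖ ‖flow - g‖ ≤ sSup ((fun f => ‖f - g‖) '' FFS) ∧
        ‖fbar - flow‖ / 2 ≤ max ‖fbar - g‖ ‖flow - g‖) ∧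
    sSup ((fun f => ‖f - ((2:ℝ)⁻¹ • (flow + fbar))‖) '' FFS) = ‖fbar - flow‖ / 2 := by
  have hbdd : ∀ g : C(X, ℝ), BddAbove ((fun f => ‖f - g‖) '' FFS) := by
    intro g
    refine ⟨max ‖fbar - g‖ ‖flow - g‖, ?_⟩
    rintro _ ⟨f, hf, rfl⟩
    exact SM_pointwise_bound FFS flow fbar hbetween g f hf
  have hmain : ∀ g : C(X, ℝ),
      max ‖fbar - g‖ ‖flow - g‖ ≤ sSup ((fun f => ‖f - g‖) '' FFS) ∧
      ‖fbar - flow‖ / 2 ≤ max ‖fbar - g‖ ‖flow - g‖ := by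
    intro g
    constructor
    · exact max_le (SM_closure_le_sSup FFS fbar g hfbar (hbdd g))
        (SM_closure_le_sSup FFS flow g hflow (hbdd g))
    · have : ‖fbar - flow‖ ≤ ‖fbar - g‖ + ‖flow - g‖ := by
        have := norm_sub_le_norm_sub_add_norm_sub fbar g flow
        have h2 : ‖g - flow‖ = ‖flow - g‖ := norm_sub_rev _ _
        linarith
      have h1 : ‖fbar - g‖ ≤ max ‖fbar - g‖ ‖flow - g‖ := le_max_left _ _
      have h2 : ‖flow - g‖ ≤ max ‖fbar - g‖ ‖flow - g‖ := le_max_right _ _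
      linarith
  refine ⟨hmain, ?_⟩
  set c : C(X, ℝ) := (2:ℝ)⁻¹ • (flow + fbar) with hc
  have hb : fbar - c = (2:ℝ)⁻¹ • (fbar - flow) := by
    ext x; simp [hc]; ring
  have hl : flow - c = -((2:ℝ)⁻¹ • (fbar - flow)) := by
    ext x; simp [hc]; ring
  have hnb : ‖fbar - c‖ = ‖fbar - flow‖ / 2 := by
    rw [hb]
    have := norm_smul ((2:ℝ)⁻¹) (fbar - flow)
    rw [this]; simp; ring
  have hnl : ‖flow - c‖ = ‖fbar - flow‖ / 2 := by
    rw [hl, norm_neg]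
    have := norm_smul ((2:ℝ)⁻¹) (fbar - flow)
    rw [this]; simp; ring
  have hmax : max ‖fbar - c‖ ‖flow - c‖ = ‖fbar - flow‖ / 2 := by
    rw [hnb, hnl, max_self]
  apply le_antisymm
  · apply Real.sSup_le
    · rintro _ ⟨f, hf, rfl⟩
      calc ‖f - c‖ ≤ max ‖fbar - c‖ ‖flow - c‖ :=
            SM_pointwise_bound FFS flow fbar hbetween c f hf
        _ = _ := hmax
    · positivity
  · rw [← hmax]; exact (hmain c).1
end
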